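/- Let S, B_i, B_j be subspaces of ℝ^N, and set A'_ij = B_i ⊓ (B_i ⊓ B_j)ᗮ, A'_ji = B_j ⊓ (B_i ⊓ B_j)ᗮ, W = S ⊓ (A'_ij)ᗮ and V = S ⊓ Wᗮ. If ⟨x, (P_{B_i} − P_{B_j})x⟩ > 0 for every nonzero x ∈ S, then W ≤ (A'_ji)ᗮ (indeed W is the trivial subspace) and ⟨x, (P_{A'_ij} − P_{A'_ji})x⟩ > 0 for every nonzero x ∈ V. -/

import Mathlib

/-- The orthogonal projection onto a subspace `S`, viewed as an endomorphism. -/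
noncomputable def projCLM {E : Type*} [NormedAddCommGroup E] [InnerProductSpace ℝ E]
    [FiniteDimensional ℝ E] (S : Submodule ℝ E) : E →L[ℝ] E :=
  S.subtypeL.comp (Submodule.orthogonalProjection S)

/-!
With `C = B_i ⊓ B_j`, both `B_i` and `B_j` split orthogonally as `C ⊔ (B ⊓ Cᗮ)`, so the common
summand `P_C` cancels and `P_{B_i} − P_{B_j} = P_{A'_ij} − P_{A'_ji}`. For `x ⊥ A'_ij` the
quadratic form of the right-hand side is `−‖P_{A'_ji} x‖² ≤ 0`, so its positivity on `S` forces
`W = ⊥`; positivity on `V ≤ S` is inherited directly.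
-/

namespace Submodule

variable {𝕜 E : Type*} [RCLike 𝕜] [NormedAddCommGroup E] [InnerProductSpace 𝕜 E]

theorem IsOrtho.starProjection_sup_apply {U V : Submodule 𝕜 E} [U.HasOrthogonalProjection]
    [V.HasOrthogonalProjection] [(U ⊔ V).HasOrthogonalProjection] (h : U ⟂ V) (x : E) :
    (U ⊔ V).starProjection x = U.starProjection x + V.starProjection x := by
  refine eq_starProjection_of_mem_orthogonal
    (add_mem_sup (U.starProjection_apply_mem x) (V.starProjection_apply_mem x)) ?_
  rw [← inf_orthogonal]
  constructor
  · rw [← sub_sub]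
    exact sub_mem (sub_starProjection_mem_orthogonal x) (h.symm (V.starProjection_apply_mem x))
  · rw [add_comm, ← sub_sub]
    exact sub_mem (sub_starProjection_mem_orthogonal x) (h (U.starProjection_apply_mem x))

theorem starProjection_eq_add_starProjection_inf_orthogonal {B C : Submodule 𝕜 E}
    [B.HasOrthogonalProjection] [C.HasOrthogonalProjection]
    [(B ⊓ Cᗮ).HasOrthogonalProjection] (hCB : C ≤ B) :
    B.starProjection = C.starProjection + (B ⊓ Cᗮ).starProjection := by
  have hsup : C ⊔ (B ⊓ Cᗮ) = B := by
    rw [inf_comm]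
    exact sup_orthogonal_inf_of_hasOrthogonalProjection hCB
  have hortho : C ⟂ (B ⊓ Cᗮ) := (isOrtho_orthogonal_right C).mono_right inf_le_right
  have : (C ⊔ (B ⊓ Cᗮ)).HasOrthogonalProjection := by rw [hsup]; infer_instance
  ext x
  rw [add_apply, ← hortho.starProjection_sup_apply x]
  congr!
  exact hsup.symm

theorem starProjection_sub_starProjection_eq_of_le {B₁ B₂ C : Submodule 𝕜 E}
    [B₁.HasOrthogonalProjection] [B₂.HasOrthogonalProjection] [C.HasOrthogonalProjection]
    [(B₁ ⊓ Cᗮ).HasOrthogonalProjection] [(B₂ ⊓ Cᗮ).HasOrthogonalProjection]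
    (h₁ : C ≤ B₁) (h₂ : C ≤ B₂) :
    B₁.starProjection - B₂.starProjection =
      (B₁ ⊓ Cᗮ).starProjection - (B₂ ⊓ Cᗮ).starProjection := by
  rw [starProjection_eq_add_starProjection_inf_orthogonal h₁,
    starProjection_eq_add_starProjection_inf_orthogonal h₂, add_sub_add_left_eq_sub]

theorem real_inner_sub_starProjection_apply_nonpos_of_mem_orthogonal {F : Type*}
    [NormedAddCommGroup F] [InnerProductSpace ℝ F] {U V : Submodule ℝ F}
    [U.HasOrthogonalProjection] [V.HasOrthogonalProjection] {x : F} (hx : x ∈ Uᗮ) :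
    inner ℝ x ((U.starProjection - V.starProjection) x) ≤ 0 := by
  rw [sub_apply, inner_sub_right, (U.starProjection_apply_eq_zero_iff).mpr hx,
    inner_zero_right, zero_sub, neg_nonpos, real_inner_comm]
  exact V.re_inner_starProjection_nonneg x

end Submodule

open Submodule

theorem projCLM_eq_starProjection {E : Type*} [NormedAddCommGroup E] [InnerProductSpace ℝ E]
    [FiniteDimensional ℝ E] (S : Submodule ℝ E) : projCLM S = S.starProjection :=
  rfl

/-- The proof step of Corollary 2 of the paper: if `⟨x, (P_{B_i} − P_{B_j})x⟩ > 0` for all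
nonzero `x ∈ S`, then `W ≤ (A'_ji)ᗮ` (indeed `W = ⊥`) and
`⟨x, (P_{A'_ij} − P_{A'_ji})x⟩ > 0` for all nonzero `x ∈ V`. -/
theorem corollary2_step
    (N : ℕ) (S Bi Bj : Submodule ℝ (EuclideanSpace ℝ (Fin N)))
    (Aij Aji W V : Submodule ℝ (EuclideanSpace ℝ (Fin N)))
    (hAij : Aij = Bi ⊓ (Bi ⊓ Bj)ᗮ) (hAji : Aji = Bj ⊓ (Bi ⊓ Bj)ᗮ)
    (hW : W = S ⊓ Aijᗮ) (hV : V = S ⊓ Wᗮ)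
    (h : ∀ x ∈ S, x ≠ 0 → 0 < (inner ℝ x ((projCLM Bi - projCLM Bj) x) : ℝ)) :
    W ≤ Ajiᗮ ∧ W = ⊥ ∧
      (∀ x ∈ V, x ≠ 0 → 0 < (inner ℝ x ((projCLM Aij - projCLM Aji) x) : ℝ)) := by
  have hdiff : projCLM Bi - projCLM Bj = projCLM Aij - projCLM Aji := by
    subst hAij hAji
    exact starProjection_sub_starProjection_eq_of_le inf_le_left inf_le_right
  rw [hdiff] at h
  have hW_bot : W = ⊥ := by
    refine (Submodule.eq_bot_iff W).mpr fun x hx ↦ ?_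
    rw [hW] at hx
    by_contra hx0
    refine (h x hx.1 hx0).not_ge ?_
    rw [projCLM_eq_starProjection, projCLM_eq_starProjection]
    exact real_inner_sub_starProjection_apply_nonpos_of_mem_orthogonal hx.2
  exact ⟨hW_bot ▸ bot_le, hW_bot, fun x hx ↦ h x (hV ▸ hx).1⟩
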